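/- arXiv:2206.08810 — 2 statements merged into one kernel-verified Lean document; each statement's English description precedes it below -/
import Mathlib

section
/- Let n ≥ 1, W a linear subspace of ℝⁿ, d, c ∈ ℝⁿ, P = {x ∈ ℝⁿ : x ∈ W + d, x ≥ 0}, D = {s ∈ ℝⁿ : s ∈ W⊥ + c, s ≥ 0}, and let x⋆ ∈ P, s⋆ ∈ D with ⟨x⋆, s⋆⟩ = 0. Let (x, s) be a central path point at parameter μ > 0. Then ⟨x, s⋆⟩ ≤ nμ and ⟨x⋆, s⟩ ≤ nμ (so x ∈ P_{nμ} and s ∈ D_{nμ}, whence x_i ≤ x^m_i(nμ) and s_i ≤ s^m_i(nμ) for all i); moreover, for every y ∈ P with ⟨y, s⋆⟩ ≤ nμ, every t ∈ D with ⟨x⋆, t⟩ ≤ nμ, and every i ∈ [n], one has y_i ≤ 2n·x_i and t_i ≤ 2n·s_i. Consequently the central path point satisfies z^m(nμ)/(2n) ≤ (x, s) ≤ z^m(nμ) entrywise, where z^m(g) = (x^m(g), s^m(g)) is the max central path. -/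
/-!
A central path point has duality gap `⟪x, s⟫ = n μ`. Since `W + d` and `W⊥ + c` are orthogonal
affine spaces, `⟪a, u⟫ + ⟪b, v⟫ = ⟪a, v⟫ + ⟪b, u⟫` for `a, b ∈ W + d` and `u, v ∈ W⊥ + c`.
With `(a, b, u, v) = (x, x⋆, s, s⋆)` and `⟪x⋆, s⋆⟫ = 0` the two nonnegative gaps `⟪x, s⋆⟫` and
`⟪x⋆, s⟫` add up to `n μ`. With `(a, b, u, v) = (y, x, s, s⋆)` a feasible `y` with gap at most `n μ`
satisfies `y i * s i ≤ ⟪y, s⟫ ≤ 2 n μ = 2 n x i * s i`; so the suprema defining the max central path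
are finite and `x ≤ x^m(n μ) ≤ 2 n x`. The dual statements follow by exchanging `W` with `W⊥`,
as `W ≤ W⊥⊥`.
-/

open scoped RealInnerProductSpace

/-- The `i`-th coordinate `x^m_i(g)` of the primal max central path:
the supremum of `x i` over primal feasible points `x` with optimality gap at most `g`. -/
noncomputable def primalMCP (n : ℕ) (W : Submodule ℝ (EuclideanSpace ℝ (Fin n)))
    (d sstar : EuclideanSpace ℝ (Fin n)) (g : ℝ) (i : Fin n) : ℝ :=
  sSup {t : ℝ | ∃ x : EuclideanSpace ℝ (Fin n),
    x - d ∈ W ∧ (∀ j, 0 ≤ x j) ∧ ⟪x, sstar⟫ ≤ g ∧ t = x i}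

/-- The `i`-th coordinate `s^m_i(g)` of the dual max central path:
the supremum of `s i` over dual feasible points `s` with optimality gap at most `g`. -/
noncomputable def dualMCP (n : ℕ) (W : Submodule ℝ (EuclideanSpace ℝ (Fin n)))
    (c xstar : EuclideanSpace ℝ (Fin n)) (g : ℝ) (i : Fin n) : ℝ :=
  sSup {t : ℝ | ∃ s : EuclideanSpace ℝ (Fin n),
    s - c ∈ Wᗮ ∧ (∀ j, 0 ≤ s j) ∧ ⟪xstar, s⟫ ≤ g ∧ t = s i}

theorem inner_add_inner_eq_swap_of_sub_mem {E : Type*} [NormedAddCommGroup E]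
    [InnerProductSpace ℝ E] {W : Submodule ℝ E} {d c a b u v : E}
    (ha : a - d ∈ W) (hb : b - d ∈ W) (hu : u - c ∈ Wᗮ) (hv : v - c ∈ Wᗮ) :
    ⟪a, u⟫ + ⟪b, v⟫ = ⟪a, v⟫ + ⟪b, u⟫ := by
  have hab : a - b ∈ W := by simpa using W.sub_mem ha hb
  have huv : u - v ∈ Wᗮ := by simpa using Wᗮ.sub_mem hu hv
  have h0 : ⟪a - b, u - v⟫ = 0 := huv _ hab
  rw [inner_sub_left, inner_sub_right, inner_sub_right] at h0
  linarith

section EuclideanSpace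

variable {ι : Type*} [Fintype ι]

theorem EuclideanSpace.inner_nonneg_of_nonneg {a b : EuclideanSpace ℝ ι}
    (ha : ∀ i, 0 ≤ a i) (hb : ∀ i, 0 ≤ b i) : 0 ≤ ⟪a, b⟫ := by
  rw [PiLp.inner_apply]
  exact Finset.sum_nonneg fun i _ => mul_nonneg (hb i) (ha i)

theorem EuclideanSpace.mul_le_inner_of_nonneg {a b : EuclideanSpace ℝ ι}
    (ha : ∀ i, 0 ≤ a i) (hb : ∀ i, 0 ≤ b i) (i : ι) : a i * b i ≤ ⟪a, b⟫ := by
  rw [PiLp.inner_apply]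
  have hterm : ∀ j ∈ Finset.univ, 0 ≤ b j * a j := fun j _ => mul_nonneg (hb j) (ha j)
  simpa [mul_comm] using Finset.single_le_sum hterm (Finset.mem_univ i)

structure IsCentralPathPoint (W : Submodule ℝ (EuclideanSpace ℝ ι)) (d c : EuclideanSpace ℝ ι)
    (μ : ℝ) (x s : EuclideanSpace ℝ ι) : Prop where
  primal_mem : x - d ∈ W
  dual_mem : s - c ∈ Wᗮ
  primal_pos : ∀ i, 0 < x i
  dual_pos : ∀ i, 0 < s i
  mul_eq : ∀ i, x i * s i = μ

namespace IsCentralPathPoint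

variable {W : Submodule ℝ (EuclideanSpace ℝ ι)} {d c x s xstar sstar : EuclideanSpace ℝ ι} {μ : ℝ}

theorem symm (h : IsCentralPathPoint W d c μ x s) : IsCentralPathPoint Wᗮ c d μ s x where
  primal_mem := h.dual_mem
  dual_mem := W.le_orthogonal_orthogonal h.primal_mem
  primal_pos := h.dual_pos
  dual_pos := h.primal_pos
  mul_eq i := by rw [mul_comm, h.mul_eq]

theorem inner_eq (h : IsCentralPathPoint W d c μ x s) : ⟪x, s⟫ = Fintype.card ι * μ := by
  simp [PiLp.inner_apply, mul_comm (s _), h.mul_eq]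

theorem inner_le_of_optimal (h : IsCentralPathPoint W d c μ x s)
    (hxstar : xstar - d ∈ W) (hxstar_nonneg : ∀ i, 0 ≤ xstar i)
    (hsstar : sstar - c ∈ Wᗮ) (hopt : ⟪xstar, sstar⟫ = 0) :
    ⟪x, sstar⟫ ≤ Fintype.card ι * μ := by
  have hswap := inner_add_inner_eq_swap_of_sub_mem h.primal_mem hxstar h.dual_mem hsstar
  have hdual_gap : 0 ≤ ⟪xstar, s⟫ :=
    EuclideanSpace.inner_nonneg_of_nonneg hxstar_nonneg fun i => (h.dual_pos i).le
  linarith [h.inner_eq]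

theorem apply_le_two_mul (h : IsCentralPathPoint W d c μ x s)
    (hsstar : sstar - c ∈ Wᗮ) (hsstar_nonneg : ∀ i, 0 ≤ sstar i)
    {y : EuclideanSpace ℝ ι} (hy : y - d ∈ W) (hy_nonneg : ∀ j, 0 ≤ y j)
    (hy_gap : ⟪y, sstar⟫ ≤ Fintype.card ι * μ) (i : ι) :
    y i ≤ 2 * Fintype.card ι * x i := by
  have hswap := inner_add_inner_eq_swap_of_sub_mem hy h.primal_mem h.dual_mem hsstar
  have hx_gap : 0 ≤ ⟪x, sstar⟫ :=
    EuclideanSpace.inner_nonneg_of_nonneg (fun j => (h.primal_pos j).le) hsstar_nonneg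
  have hys : y i * s i ≤ 2 * Fintype.card ι * x i * s i := by
    calc y i * s i ≤ ⟪y, s⟫ :=
          EuclideanSpace.mul_le_inner_of_nonneg hy_nonneg (fun j => (h.dual_pos j).le) i
      _ ≤ 2 * Fintype.card ι * μ := by linarith [h.inner_eq]
      _ = 2 * Fintype.card ι * x i * s i := by rw [mul_assoc _ (x i), h.mul_eq]
  exact le_of_mul_le_mul_right hys (h.dual_pos i)

end IsCentralPathPoint

end EuclideanSpace

section MaxCentralPath

variable {n : ℕ} {W : Submodule ℝ (EuclideanSpace ℝ (Fin n))} {d c sstar : EuclideanSpace ℝ (Fin n)}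
  {g B : ℝ} {i : Fin n}

theorem primalMCP_mem_Icc {x : EuclideanSpace ℝ (Fin n)}
    (hx : x - d ∈ W) (hx_nonneg : ∀ j, 0 ≤ x j) (hx_gap : ⟪x, sstar⟫ ≤ g)
    (hB : ∀ y : EuclideanSpace ℝ (Fin n), y - d ∈ W → (∀ j, 0 ≤ y j) → ⟪y, sstar⟫ ≤ g →
      y i ≤ B) :
    primalMCP n W d sstar g i ∈ Set.Icc (x i) B := by
  have hmem : x i ∈ {t : ℝ | ∃ y : EuclideanSpace ℝ (Fin n),
      y - d ∈ W ∧ (∀ j, 0 ≤ y j) ∧ ⟪y, sstar⟫ ≤ g ∧ t = y i} := ⟨x, hx, hx_nonneg, hx_gap, rfl⟩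
  have hbound : ∀ t ∈ {t : ℝ | ∃ y : EuclideanSpace ℝ (Fin n),
      y - d ∈ W ∧ (∀ j, 0 ≤ y j) ∧ ⟪y, sstar⟫ ≤ g ∧ t = y i}, t ≤ B := by
    rintro _ ⟨y, hy, hy_nonneg, hy_gap, rfl⟩
    exact hB y hy hy_nonneg hy_gap
  exact ⟨le_csSup ⟨B, hbound⟩ hmem, csSup_le ⟨_, hmem⟩ hbound⟩

theorem dualMCP_eq_primalMCP_orthogonal (xstar : EuclideanSpace ℝ (Fin n)) :
    dualMCP n W c xstar = primalMCP n Wᗮ c xstar := by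
  funext g j
  simp only [dualMCP, primalMCP, real_inner_comm xstar]

end MaxCentralPath

theorem statement11_general (n : ℕ)
    (W : Submodule ℝ (EuclideanSpace ℝ (Fin n)))
    (d c xstar sstar : EuclideanSpace ℝ (Fin n))
    (hxstarW : xstar - d ∈ W) (hxstarpos : ∀ i, 0 ≤ xstar i)
    (hsstarW : sstar - c ∈ Wᗮ) (hsstarpos : ∀ i, 0 ≤ sstar i)
    (hopt : ⟪xstar, sstar⟫ = 0)
    (μ : ℝ)
    (x s : EuclideanSpace ℝ (Fin n))
    (hxW : x - d ∈ W) (hsW : s - c ∈ Wᗮ)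
    (hxpos : ∀ i, 0 < x i) (hspos : ∀ i, 0 < s i)
    (hxs : ∀ i, x i * s i = μ) :
    ⟪x, sstar⟫ ≤ n * μ ∧ ⟪xstar, s⟫ ≤ n * μ ∧
    (∀ i, x i ≤ primalMCP n W d sstar (n * μ) i) ∧
    (∀ i, s i ≤ dualMCP n W c xstar (n * μ) i) ∧
    (∀ y : EuclideanSpace ℝ (Fin n), y - d ∈ W → (∀ j, 0 ≤ y j) → ⟪y, sstar⟫ ≤ n * μ →
      ∀ i, y i ≤ 2 * n * x i) ∧
    (∀ t : EuclideanSpace ℝ (Fin n), t - c ∈ Wᗮ → (∀ j, 0 ≤ t j) → ⟪xstar, t⟫ ≤ n * μ →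
      ∀ i, t i ≤ 2 * n * s i) ∧
    (∀ i, primalMCP n W d sstar (n * μ) i / (2 * n) ≤ x i) ∧
    (∀ i, dualMCP n W c xstar (n * μ) i / (2 * n) ≤ s i) := by
  have h : IsCentralPathPoint W d c μ x s := ⟨hxW, hsW, hxpos, hspos, hxs⟩
  have hxstarW' : xstar - d ∈ Wᗮᗮ := W.le_orthogonal_orthogonal hxstarW
  have hx_gap : ⟪x, sstar⟫ ≤ n * μ := by
    simpa using h.inner_le_of_optimal hxstarW hxstarpos hsstarW hopt
  have hs_gap : ⟪s, xstar⟫ ≤ n * μ := by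
    simpa using h.symm.inner_le_of_optimal hsstarW hsstarpos hxstarW' (by rwa [real_inner_comm])
  have hy_le : ∀ y : EuclideanSpace ℝ (Fin n), y - d ∈ W → (∀ j, 0 ≤ y j) →
      ⟪y, sstar⟫ ≤ n * μ → ∀ i, y i ≤ 2 * n * x i := fun y hy hy_nonneg hy_gap i => by
    simpa using h.apply_le_two_mul hsstarW hsstarpos hy hy_nonneg (by simpa using hy_gap) i
  have ht_le : ∀ t : EuclideanSpace ℝ (Fin n), t - c ∈ Wᗮ → (∀ j, 0 ≤ t j) →
      ⟪t, xstar⟫ ≤ n * μ → ∀ i, t i ≤ 2 * n * s i := fun t ht ht_nonneg ht_gap i => by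
    simpa using h.symm.apply_le_two_mul hxstarW' hxstarpos ht ht_nonneg (by simpa using ht_gap) i
  have hprimal i := primalMCP_mem_Icc hxW (fun j => (hxpos j).le) hx_gap (hy_le · · · · i)
  have hdual i := dualMCP_eq_primalMCP_orthogonal (W := W) xstar ▸
    primalMCP_mem_Icc hsW (fun j => (hspos j).le) hs_gap (ht_le · · · · i)
  refine ⟨hx_gap, by rwa [real_inner_comm], fun i => (hprimal i).1, fun i => (hdual i).1, hy_le,
    fun t ht ht_nonneg ht_gap => ht_le t ht ht_nonneg (by rwa [real_inner_comm]),
    fun i => ?_, fun i => ?_⟩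
  · exact div_le_of_le_mul₀ (by positivity) (hxpos i).le (by linarith [(hprimal i).2])
  · exact div_le_of_le_mul₀ (by positivity) (hspos i).le (by linarith [(hdual i).2])

theorem statement11 (n : ℕ) (hn : 1 ≤ n)
    (W : Submodule ℝ (EuclideanSpace ℝ (Fin n)))
    (d c xstar sstar : EuclideanSpace ℝ (Fin n))
    (hxstarW : xstar - d ∈ W) (hxstarpos : ∀ i, 0 ≤ xstar i)
    (hsstarW : sstar - c ∈ Wᗮ) (hsstarpos : ∀ i, 0 ≤ sstar i)
    (hopt : ⟪xstar, sstar⟫ = 0)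
    (μ : ℝ) (hμ : 0 < μ)
    (x s : EuclideanSpace ℝ (Fin n))
    (hxW : x - d ∈ W) (hsW : s - c ∈ Wᗮ)
    (hxpos : ∀ i, 0 < x i) (hspos : ∀ i, 0 < s i)
    (hxs : ∀ i, x i * s i = μ) :
    ⟪x, sstar⟫ ≤ n * μ ∧ ⟪xstar, s⟫ ≤ n * μ ∧
    (∀ i, x i ≤ primalMCP n W d sstar (n * μ) i) ∧
    (∀ i, s i ≤ dualMCP n W c xstar (n * μ) i) ∧
    (∀ y : EuclideanSpace ℝ (Fin n), y - d ∈ W → (∀ j, 0 ≤ y j) → ⟪y, sstar⟫ ≤ n * μ →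
      ∀ i, y i ≤ 2 * n * x i) ∧
    (∀ t : EuclideanSpace ℝ (Fin n), t - c ∈ Wᗮ → (∀ j, 0 ≤ t j) → ⟪xstar, t⟫ ≤ n * μ →
      ∀ i, t i ≤ 2 * n * s i) ∧
    (∀ i, primalMCP n W d sstar (n * μ) i / (2 * n) ≤ x i) ∧
    (∀ i, dualMCP n W c xstar (n * μ) i / (2 * n) ≤ s i) :=
  statement11_general n W d c xstar sstar hxstarW hxstarpos hsstarW hsstarpos hopt μ x s hxW hsW
    hxpos hspos hxs
end

section
/- Let n ≥ 1, W a linear subspace of ℝⁿ, d, c ∈ ℝⁿ, θ ∈ (0,1), and 0 < μ₁ < μ₀. Suppose z^cp : [μ₁, μ₀] → ℝⁿ × ℝⁿ assigns to each μ ∈ [μ₁, μ₀] a central path point z^cp(μ) = (x^cp(μ), s^cp(μ)) at parameter μ. Let z⁰ = (x⁰, s⁰) and z¹ = (x¹, s¹) satisfy x⁰, x¹ ∈ W + d with x⁰, x¹ ≥ 0, s⁰, s¹ ∈ W⊥ + c with s⁰, s¹ ≥ 0, μ̄(z⁰) = μ₀ and μ̄(z¹) = μ₁, and assume the segment [z⁰,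 z¹] lies in the closed wide neighborhood: for every α ∈ [0,1], ((1−α)x⁰ + αx¹)·((1−α)s⁰ + αs¹) ≥ (1−θ)·μ̄((1−α)z⁰ + αz¹)·1 entrywise. Then the central path segment CP[μ₁, μ₀] is γ-polarized with γ = (1−θ)²/(16n³): there exists a set B ⊆ [n] such that for all μ ∈ [μ₁, μ₀], x^cp_i(μ) ≥ γ·x^cp_i(μ₀) for every i ∈ B and s^cp_i(μ) ≥ γ·s^cp_i(μ₀) for every i ∉ B. -/
/-!
If `x - x' ∈ W` and `s - s' ∈ Wᗮ` then `⟪x - x', s - s'⟫ = 0`, so for a nonnegative feasible pair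
`(x, s)` and the central point `(x', s')` at `μ` we get `x i * s' i ≤ ⟪x, s⟫ + ⟪x', s'⟫`. When the
gap of `(x, s)` is at most `μ`, this gives `x ≤ 2 n x'` and `s ≤ 2 n s'` coordinatewise. Hence
`z¹ ≤ 2 n z^cp(μ)` for every `μ ∈ [μ₁, μ₀]` and `z⁰ ≤ 2 n z^cp(μ₀)`.

Put `B = {i | 2 n γ x^cp_i(μ₀) ≤ x¹_i}`. For `i ∉ B`, if also `s¹_i < 2 n γ s^cp_i(μ₀)`, then the
point of `[z⁰, z¹]` at `α = 1 - γ` has `i`-th product at most `16 n² γ² μ₀`. Its gap is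
`γ μ₀ + (1 - γ) μ₁` (the gap is affine on the segment), so the wide neighbourhood forces
`(1 - θ) γ μ₀ ≤ 16 n² γ² μ₀`, which the choice `γ = (1 - θ)² / (16 n³)` rules out.
-/

open scoped RealInnerProductSpace

section InnerProductSpace

variable {E : Type*} [NormedAddCommGroup E] [InnerProductSpace ℝ E] {W : Submodule ℝ E}
  {x x' s s' : E}

theorem inner_add_inner_eq_of_sub_mem_orthogonal (hx : x - x' ∈ W) (hs : s - s' ∈ Wᗮ) :
    ⟪x, s⟫ + ⟪x', s'⟫ = ⟪x, s'⟫ + ⟪x', s⟫ := by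
  have h := Submodule.inner_right_of_mem_orthogonal hx hs
  rw [inner_sub_left, inner_sub_right, inner_sub_right] at h
  linarith

theorem inner_smul_add_smul_eq_of_sub_mem_orthogonal (hx : x - x' ∈ W) (hs : s - s' ∈ Wᗮ)
    {a b : ℝ} (hab : a + b = 1) :
    ⟪a • x + b • x', a • s + b • s'⟫ = a * ⟪x, s⟫ + b * ⟪x', s'⟫ := by
  have h := inner_add_inner_eq_of_sub_mem_orthogonal hx hs
  simp only [inner_add_left, inner_add_right, real_inner_smul_left, real_inner_smul_right]
  linear_combination -(a * b) * h + (a * ⟪x, s⟫ + b * ⟪x', s'⟫) * hab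

end InnerProductSpace

namespace EuclideanSpace

variable {ι : Type*} [Fintype ι]

theorem real_inner_eq_sum_mul (u v : EuclideanSpace ℝ ι) : ⟪u, v⟫ = ∑ i, u i * v i := by
  simp [PiLp.inner_apply, mul_comm]

theorem mul_le_real_inner {u v : EuclideanSpace ℝ ι} (hu : ∀ i, 0 ≤ u i) (hv : ∀ i, 0 ≤ v i)
    (i : ι) : u i * v i ≤ ⟪u, v⟫ := by
  rw [real_inner_eq_sum_mul]
  exact Finset.single_le_sum (fun j _ => mul_nonneg (hu j) (hv j)) (Finset.mem_univ i)

theorem real_inner_nonneg {u v : EuclideanSpace ℝ ι} (hu : ∀ i, 0 ≤ u i) (hv : ∀ i, 0 ≤ v i) :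
    0 ≤ ⟪u, v⟫ := by
  rw [real_inner_eq_sum_mul]
  exact Finset.sum_nonneg fun j _ => mul_nonneg (hu j) (hv j)

end EuclideanSpace

section CentralPath

variable {ι : Type*} [Fintype ι] (W : Submodule ℝ (EuclideanSpace ℝ ι))
  (d c : EuclideanSpace ℝ ι)

def IsFeasiblePair (x s : EuclideanSpace ℝ ι) : Prop :=
  x - d ∈ W ∧ s - c ∈ Wᗮ ∧ (∀ i, 0 ≤ x i) ∧ (∀ i, 0 ≤ s i)

def IsCentralPoint (μ : ℝ) (x s : EuclideanSpace ℝ ι) : Prop :=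
  x - d ∈ W ∧ s - c ∈ Wᗮ ∧ (∀ i, 0 < x i) ∧ (∀ i, 0 < s i) ∧ ∀ i, x i * s i = μ

variable {W d c} {μ : ℝ} {x s x' s' : EuclideanSpace ℝ ι}

theorem IsCentralPoint.isFeasiblePair (h : IsCentralPoint W d c μ x s) :
    IsFeasiblePair W d c x s :=
  ⟨h.1, h.2.1, fun i => (h.2.2.1 i).le, fun i => (h.2.2.2.1 i).le⟩

theorem IsCentralPoint.inner_eq (h : IsCentralPoint W d c μ x s) :
    ⟪x, s⟫ = Fintype.card ι * μ := by
  simp [EuclideanSpace.real_inner_eq_sum_mul, h.2.2.2.2]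

theorem IsFeasiblePair.mul_le_inner_add_inner (h : IsFeasiblePair W d c x s)
    (h' : IsFeasiblePair W d c x' s') (i : ι) :
    x i * s' i ≤ ⟪x, s⟫ + ⟪x', s'⟫ ∧ x' i * s i ≤ ⟪x, s⟫ + ⟪x', s'⟫ := by
  obtain ⟨hxW, hsW, hx, hs⟩ := h
  obtain ⟨hxW', hsW', hx', hs'⟩ := h'
  have hcross := inner_add_inner_eq_of_sub_mem_orthogonal
    (by simpa using W.sub_mem hxW hxW') (by simpa using Wᗮ.sub_mem hsW hsW')
  have := EuclideanSpace.mul_le_real_inner hx hs' i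
  have := EuclideanSpace.mul_le_real_inner hx' hs i
  have := EuclideanSpace.real_inner_nonneg hx hs'
  have := EuclideanSpace.real_inner_nonneg hx' hs
  constructor <;> linarith

theorem IsCentralPoint.le_two_card_mul (hcen : IsCentralPoint W d c μ x' s')
    (h : IsFeasiblePair W d c x s) (hgap : ⟪x, s⟫ / Fintype.card ι ≤ μ) (i : ι) :
    x i ≤ 2 * Fintype.card ι * x' i ∧ s i ≤ 2 * Fintype.card ι * s' i := by
  rw [div_le_iff₀' (Nat.cast_pos.mpr (Fintype.card_pos_iff.mpr ⟨i⟩))] at hgap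
  obtain ⟨hxs', hx's⟩ := h.mul_le_inner_add_inner hcen.isFeasiblePair i
  have hgap' := hcen.inner_eq
  have hμ := hcen.2.2.2.2 i
  constructor
  · refine le_of_mul_le_mul_right ?_ (hcen.2.2.2.1 i)
    linear_combination hxs' + hgap + hgap' - 2 * Fintype.card ι * hμ
  · refine le_of_mul_le_mul_left ?_ (hcen.2.2.1 i)
    linear_combination hx's + hgap + hgap' - 2 * Fintype.card ι * hμ

theorem IsCentralPoint.two_card_mul_le_of_wideNbhd {θ γ μ₀ μ₁ : ℝ}
    {x0 s0 x1 s1 : EuclideanSpace ℝ ι} {i : ι} (hcen : IsCentralPoint W d c μ₀ x s)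
    (hz0 : IsFeasiblePair W d c x0 s0) (hz1 : IsFeasiblePair W d c x1 s1)
    (hgap0 : ⟪x0, s0⟫ / Fintype.card ι = μ₀) (hgap1 : ⟪x1, s1⟫ / Fintype.card ι = μ₁)
    (hμ₁ : 0 ≤ μ₁) (hγ0 : 0 < γ) (hγ1 : γ ≤ 1) (hγθ : 16 * Fintype.card ι ^ 2 * γ < 1 - θ)
    (hwide : (1 - θ) * (⟪γ • x0 + (1 - γ) • x1, γ • s0 + (1 - γ) • s1⟫ / Fintype.card ι) ≤
      (γ * x0 i + (1 - γ) * x1 i) * (γ * s0 i + (1 - γ) * s1 i))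
    (hx1 : x1 i < 2 * Fintype.card ι * γ * x i) :
    2 * Fintype.card ι * γ * s i ≤ s1 i := by
  set n : ℝ := (Fintype.card ι : ℝ)
  by_contra! hs1
  have hn : 0 < n := Nat.cast_pos.mpr (Fintype.card_pos_iff.mpr ⟨i⟩)
  have hμ₀ : 0 < μ₀ := hcen.2.2.2.2 i ▸ mul_pos (hcen.2.2.1 i) (hcen.2.2.2.1 i)
  have hgap : ⟪γ • x0 + (1 - γ) • x1, γ • s0 + (1 - γ) • s1⟫ / n = γ * μ₀ + (1 - γ) * μ₁ := by
    rw [inner_smul_add_smul_eq_of_sub_mem_orthogonal (by simpa using W.sub_mem hz0.1 hz1.1)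
      (by simpa using Wᗮ.sub_mem hz0.2.1 hz1.2.1) (add_sub_cancel γ 1), ← hgap0, ← hgap1]
    field_simp
  have hcomb : ∀ a0 a1 X : ℝ, a0 ≤ 2 * n * X → 0 ≤ a1 → a1 ≤ 2 * n * γ * X →
      γ * a0 + (1 - γ) * a1 ≤ 4 * n * γ * X := by
    intro a0 a1 X ha0 ha1 ha1'
    nlinarith
  obtain ⟨hx0, hs0⟩ := hcen.le_two_card_mul hz0 hgap0.le i
  have hprod : (γ * x0 i + (1 - γ) * x1 i) * (γ * s0 i + (1 - γ) * s1 i) ≤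
      (16 * n ^ 2 * γ) * (γ * μ₀) := by
    calc _ ≤ (4 * n * γ * x i) * (4 * n * γ * s i) :=
          mul_le_mul (hcomb _ _ _ hx0 (hz1.2.2.1 i) hx1.le) (hcomb _ _ _ hs0 (hz1.2.2.2 i) hs1.le)
            (add_nonneg (mul_nonneg hγ0.le (hz0.2.2.2 i))
              (mul_nonneg (sub_nonneg.2 hγ1) (hz1.2.2.2 i)))
            (mul_nonneg (by positivity) (hcen.2.2.1 i).le)
      _ = (16 * n ^ 2 * γ) * (γ * μ₀) := by rw [← hcen.2.2.2.2 i]; ring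
  have hlow : (1 - θ) * (γ * μ₀) ≤ (1 - θ) * (γ * μ₀ + (1 - γ) * μ₁) :=
    mul_le_mul_of_nonneg_left (le_add_of_nonneg_right (mul_nonneg (sub_nonneg.2 hγ1) hμ₁))
      (by nlinarith)
  rw [hgap] at hwide
  linarith [mul_lt_mul_of_pos_right hγθ (mul_pos hγ0 hμ₀)]

end CentralPath

theorem polarization_const_bounds {n θ : ℝ} (hn : 1 ≤ n) (hθ : θ ∈ Set.Ioo (0 : ℝ) 1) :
    0 < (1 - θ) ^ 2 / (16 * n ^ 3) ∧ (1 - θ) ^ 2 / (16 * n ^ 3) ≤ 1 ∧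
      16 * n ^ 2 * ((1 - θ) ^ 2 / (16 * n ^ 3)) < 1 - θ := by
  obtain ⟨hθ0, hθ1⟩ := hθ
  have hn3 : 1 ≤ n ^ 3 := one_le_pow₀ hn
  refine ⟨by have := sub_pos.2 hθ1; positivity, ?_, ?_⟩
  · rw [div_le_one (by positivity)]
    nlinarith
  · rw [show 16 * n ^ 2 * ((1 - θ) ^ 2 / (16 * n ^ 3)) = (1 - θ) ^ 2 / n by field_simp,
      div_lt_iff₀ (by positivity)]
    nlinarith

theorem statement15 (n : ℕ) (hn : 1 ≤ n)
    (W : Submodule ℝ (EuclideanSpace ℝ (Fin n)))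
    (d c : EuclideanSpace ℝ (Fin n))
    (θ μ₀ μ₁ : ℝ) (hθ : θ ∈ Set.Ioo (0 : ℝ) 1) (hμ₁ : 0 < μ₁) (hμ₁₀ : μ₁ < μ₀)
    -- the central path on `[μ₁, μ₀]`
    (xcp scp : ℝ → EuclideanSpace ℝ (Fin n))
    (hcp : ∀ μ ∈ Set.Icc μ₁ μ₀,
      xcp μ - d ∈ W ∧ scp μ - c ∈ Wᗮ ∧
      (∀ i, 0 < xcp μ i) ∧ (∀ i, 0 < scp μ i) ∧ (∀ i, xcp μ i * scp μ i = μ))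
    -- the endpoints `z⁰ = (x0, s0)` and `z¹ = (x1, s1)` of the segment
    (x0 s0 x1 s1 : EuclideanSpace ℝ (Fin n))
    (hx0W : x0 - d ∈ W) (hx1W : x1 - d ∈ W)
    (hs0W : s0 - c ∈ Wᗮ) (hs1W : s1 - c ∈ Wᗮ)
    (hx0pos : ∀ i, 0 ≤ x0 i) (hx1pos : ∀ i, 0 ≤ x1 i)
    (hs0pos : ∀ i, 0 ≤ s0 i) (hs1pos : ∀ i, 0 ≤ s1 i)
    (hgap0 : ⟪x0, s0⟫ / n = μ₀) (hgap1 : ⟪x1, s1⟫ / n = μ₁)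
    -- the segment `[z⁰, z¹]` lies in the closed wide neighborhood `N^{-∞}(θ)`
    (hwide : ∀ α ∈ Set.Icc (0 : ℝ) 1, ∀ i,
      (1 - θ) * (⟪(1 - α) • x0 + α • x1, (1 - α) • s0 + α • s1⟫ / n) ≤
        ((1 - α) * x0 i + α * x1 i) * ((1 - α) * s0 i + α * s1 i)) :
    -- conclusion: `CP[μ₁, μ₀]` is `(1-θ)²/(16n³)`-polarized
    ∃ B : Finset (Fin n), ∀ μ ∈ Set.Icc μ₁ μ₀,
      (∀ i ∈ B, ((1 - θ) ^ 2 / (16 * n ^ 3)) * xcp μ₀ i ≤ xcp μ i) ∧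
      (∀ i ∉ B, ((1 - θ) ^ 2 / (16 * n ^ 3)) * scp μ₀ i ≤ scp μ i) := by
  replace hcp : ∀ μ ∈ Set.Icc μ₁ μ₀, IsCentralPoint W d c μ (xcp μ) (scp μ) := hcp
  have hz0 : IsFeasiblePair W d c x0 s0 := ⟨hx0W, hs0W, hx0pos, hs0pos⟩
  have hz1 : IsFeasiblePair W d c x1 s1 := ⟨hx1W, hs1W, hx1pos, hs1pos⟩
  have hcard : (n : ℝ) = Fintype.card (Fin n) := by simp
  rw [hcard] at hgap0 hgap1 hwide ⊢
  obtain ⟨hγ0, hγ1, hγθ⟩ :=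
    polarization_const_bounds (n := (Fintype.card (Fin n) : ℝ)) (by simpa using hn) hθ
  set γ := (1 - θ) ^ 2 / (16 * (Fintype.card (Fin n) : ℝ) ^ 3)
  have h2n : (0 : ℝ) < 2 * Fintype.card (Fin n) := by simp; omega
  have hμ₀ : μ₀ ∈ Set.Icc μ₁ μ₀ := ⟨hμ₁₀.le, le_rfl⟩
  refine ⟨({i | 2 * Fintype.card (Fin n) * γ * xcp μ₀ i ≤ x1 i} : Finset (Fin n)),
    fun μ hμ => ⟨fun i hi => ?_, fun i hi => ?_⟩⟩
  all_goals
    obtain ⟨hx1, hs1⟩ := (hcp μ hμ).le_two_card_mul hz1 (hgap1.trans_le hμ.1) i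
    refine le_of_mul_le_mul_left ?_ h2n
    rw [Finset.mem_filter_univ] at hi
  · linarith
  · have hwide' := hwide (1 - γ) ⟨by linarith, by linarith⟩ i
    rw [sub_sub_cancel] at hwide'
    linarith [(hcp μ₀ hμ₀).two_card_mul_le_of_wideNbhd hz0 hz1 hgap0 hgap1 hμ₁.le hγ0 hγ1 hγθ
      hwide' (not_le.mp hi)]
end
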